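/- arXiv:2407.09087 — 5 statements merged into one kernel-verified Lean document; each statement's English description precedes it below -/
import Mathlib

section
/- Suppose M(x₁,x₂) > 0 implies y₁(x₁) = y₂(x₂). If every block of the partition S is label-pure, i.e. each Sᵢ is contained in a single fiber of y₂, then the mask-induced error vanishes: α(S) = 0. In particular α(S^y) = 0 for the label partition S^y. -/
open Finset

/-- The augmentation weight induced by masked image modeling with discrete
tokenization given by a partition `S` of `X₂`. -/
noncomputable def augWeight {X₁ X₂ : Type*} [Fintype X₁] [Fintype X₂] [DecidableEq X₂]
    (M : X₁ → X₂ → ℝ) (S : Finpartition (univ : Finset X₂)) (x₁ x₁' : X₁) : ℝ :=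
  ∑ p ∈ S.parts,
    (∑ x₂ ∈ p, M x₁ x₂) * (∑ x₂ ∈ p, M x₁' x₂) / (∑ x, ∑ x₂ ∈ p, M x x₂)

/-- The mask-induced error `α(S) = Σ_{(x₁,x₁') : y₁(x₁) ≠ y₁(x₁')} A_S(x₁, x₁')`. -/
noncomputable def maskError {X₁ X₂ Y : Type*} [Fintype X₁] [Fintype X₂] [DecidableEq X₂]
    [DecidableEq Y] (M : X₁ → X₂ → ℝ) (S : Finpartition (univ : Finset X₂))
    (y₁ : X₁ → Y) : ℝ :=
  ∑ x₁, ∑ x₁', if y₁ x₁ ≠ y₁ x₁' then augWeight M S x₁ x₁' else 0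

/-- The label partition `S^y`: the partition of `X₂` into the fibers of `y₂`. -/
def labelPartition {X₂ Y : Type*} [Fintype X₂] [DecidableEq X₂] [DecidableEq Y]
    (y₂ : X₂ → Y) : Finpartition (univ : Finset X₂) :=
  haveI : DecidableRel (Setoid.ker y₂).r := fun a b => inferInstanceAs (Decidable (y₂ a = y₂ b))
  Finpartition.ofSetoid (Setoid.ker y₂)

/-! By compatibility, only points `x₁` with label `k` put mass on a block of label `k`. So when
`y₁ x₁ ≠ y₁ x₁'`, in every summand of `A_S(x₁, x₁')` one of the two numerator factors vanishes. -/

section LabelCompatible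

variable {X₁ X₂ Y : Type*} {M : X₁ → X₂ → ℝ} {y₁ : X₁ → Y} {y₂ : X₂ → Y}

lemma sum_eq_zero_of_label_ne (hM : ∀ x₁ x₂, 0 ≤ M x₁ x₂)
    (hcompat : ∀ x₁ x₂, 0 < M x₁ x₂ → y₁ x₁ = y₂ x₂) {p : Finset X₂} {k : Y}
    (hk : ∀ x₂ ∈ p, y₂ x₂ = k) {x : X₁} (hx : y₁ x ≠ k) : ∑ x₂ ∈ p, M x x₂ = 0 :=
  sum_eq_zero fun x₂ hx₂ => (hM x x₂).eq_or_lt.elim Eq.symm fun hpos =>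
    absurd ((hcompat x x₂ hpos).trans (hk x₂ hx₂)) hx

variable [Fintype X₁] [Fintype X₂] [DecidableEq X₂]

lemma augWeight_eq_zero_of_label_ne (hM : ∀ x₁ x₂, 0 ≤ M x₁ x₂)
    (hcompat : ∀ x₁ x₂, 0 < M x₁ x₂ → y₁ x₁ = y₂ x₂) {S : Finpartition (univ : Finset X₂)}
    (hpure : ∀ p ∈ S.parts, ∃ k : Y, ∀ x₂ ∈ p, y₂ x₂ = k) {x₁ x₁' : X₁}
    (h : y₁ x₁ ≠ y₁ x₁') : augWeight M S x₁ x₁' = 0 := by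
  refine sum_eq_zero fun p hp => ?_
  obtain ⟨k, hk⟩ := hpure p hp
  by_cases h₁ : y₁ x₁ = k
  · have h₂ : y₁ x₁' ≠ k := fun h₂ => h (h₁.trans h₂.symm)
    rw [sum_eq_zero_of_label_ne hM hcompat hk h₂, mul_zero, zero_div]
  · rw [sum_eq_zero_of_label_ne hM hcompat hk h₁, zero_mul, zero_div]

lemma maskError_eq_zero_of_forall_label_pure [DecidableEq Y] (hM : ∀ x₁ x₂, 0 ≤ M x₁ x₂)
    (hcompat : ∀ x₁ x₂, 0 < M x₁ x₂ → y₁ x₁ = y₂ x₂) {S : Finpartition (univ : Finset X₂)}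
    (hpure : ∀ p ∈ S.parts, ∃ k : Y, ∀ x₂ ∈ p, y₂ x₂ = k) : maskError M S y₁ = 0 :=
  sum_eq_zero fun _ _ => sum_eq_zero fun _ _ =>
    ite_eq_right_iff.mpr (augWeight_eq_zero_of_label_ne hM hcompat hpure)

end LabelCompatible

section LabelPartition

variable {X₂ Y : Type*} [Fintype X₂] [DecidableEq X₂] [DecidableEq Y] {y₂ : X₂ → Y}

lemma mem_part_labelPartition_iff {a b : X₂} :
    b ∈ (labelPartition y₂).part a ↔ y₂ a = y₂ b :=
  Finpartition.mem_part_ofSetoid_iff_rel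

lemma labelPartition_parts_label_pure :
    ∀ p ∈ (labelPartition y₂).parts, ∃ k : Y, ∀ x₂ ∈ p, y₂ x₂ = k := by
  intro p hp
  obtain ⟨a, ha⟩ := Finpartition.nonempty_of_mem_parts _ hp
  refine ⟨y₂ a, fun b hb => (mem_part_labelPartition_iff.mp ?_).symm⟩
  rwa [Finpartition.part_eq_of_mem _ hp ha]

end LabelPartition

theorem maskError_eq_zero_of_labelPure_general {X₁ X₂ Y : Type*} [Fintype X₁] [Fintype X₂]
    [DecidableEq X₂] [DecidableEq Y]
    (M : X₁ → X₂ → ℝ)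
    (hM : ∀ x₁ x₂, 0 ≤ M x₁ x₂)
    (y₁ : X₁ → Y) (y₂ : X₂ → Y)
    (hcompat : ∀ x₁ x₂, 0 < M x₁ x₂ → y₁ x₁ = y₂ x₂)
    (S : Finpartition (univ : Finset X₂))
    (hpure : ∀ p ∈ S.parts, ∃ k : Y, ∀ x₂ ∈ p, y₂ x₂ = k) :
    maskError M S y₁ = 0 ∧ maskError M (labelPartition y₂) y₁ = 0 :=
  ⟨maskError_eq_zero_of_forall_label_pure hM hcompat hpure,
    maskError_eq_zero_of_forall_label_pure hM hcompat labelPartition_parts_label_pure⟩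

/-- If `M(x₁,x₂) > 0` implies `y₁(x₁) = y₂(x₂)` and every block of the partition `S`
is label-pure (contained in a single fiber of `y₂`), then the mask-induced error
vanishes: `α(S) = 0`.  In particular, `α(S^y) = 0` for the label partition `S^y`. -/
theorem maskError_eq_zero_of_labelPure {X₁ X₂ Y : Type*} [Fintype X₁] [Fintype X₂] [Fintype Y]
    [DecidableEq X₂] [DecidableEq Y]
    (M : X₁ → X₂ → ℝ)
    (hM : ∀ x₁ x₂, 0 ≤ M x₁ x₂)
    (hsum : ∑ x₁, ∑ x₂, M x₁ x₂ = 1)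
    (y₁ : X₁ → Y) (y₂ : X₂ → Y)
    (hcompat : ∀ x₁ x₂, 0 < M x₁ x₂ → y₁ x₁ = y₂ x₂)
    (S : Finpartition (univ : Finset X₂))
    (hw : ∀ p ∈ S.parts, 0 < ∑ x₁, ∑ x₂ ∈ p, M x₁ x₂)
    (hpure : ∀ p ∈ S.parts, ∃ k : Y, ∀ x₂ ∈ p, y₂ x₂ = k) :
    maskError M S y₁ = 0 ∧ maskError M (labelPartition y₂) y₁ = 0 :=
  maskError_eq_zero_of_labelPure_general M hM y₁ y₂ hcompat S hpure
end

section
/- Suppose M(x₁,x₂) > 0 implies y₁(x₁) = y₂(x₂). For the label partition S^y (assumed to have all blocks of positive mass), the squared Frobenius norm of the normalized adjacency matrix, which equals the sum of squared eigenvalues Σᵢ λᵢ², satisfies ‖Ā_{S^y}‖_F² = c, where c is the number of label classes of positive mass, i.e. c = #{k ∈ Y : Σ_{x₁ : y₁(x₁)=k} w(x₁) > 0}. -/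
open Finset

/-- The normalized adjacency matrix
`Ā_S(x₁,x₁') = A_S(x₁,x₁') / √(w(x₁) · w(x₁'))` with `w(x₁) = Σ_{x₂} M(x₁,x₂)`. -/
noncomputable def normAdj {X₁ X₂ : Type*} [Fintype X₁] [Fintype X₂] [DecidableEq X₂]
    (M : X₁ → X₂ → ℝ) (S : Finpartition (univ : Finset X₂)) (x₁ x₁' : X₁) : ℝ :=
  augWeight M S x₁ x₁' / Real.sqrt ((∑ x₂, M x₁ x₂) * (∑ x₂, M x₁' x₂))

/-!
Since `M` is supported on pairs with equal labels, the block `S_k = y₂⁻¹(k)` of the label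
partition satisfies `M(x₁, S_k) = w(x₁)` if `y₁ x₁ = k` and `0` otherwise, so `w(S_k) = W_k`,
the mass of the label class `k` (`w = rowMass M`, `W = classMass y₁ w`). Hence
`Ā(x₁,x₁') = √(w(x₁) w(x₁')) / W_k` when both points carry the label `k`, and `0` otherwise:
`Ā` is block diagonal with blocks `u_k u_kᵀ`, where `u_k = (√(w(x₁) / W_k))_{y₁ x₁ = k}` is a
unit vector, and each class of positive mass contributes exactly `1` to the squared Frobenius
norm.
-/

section

variable {X₁ X₂ Y : Type*} [Fintype X₂] [DecidableEq Y]

theorem sum_parts_labelPartition [Fintype Y] [DecidableEq X₂] (y₂ : X₂ → Y)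
    (F : Finset X₂ → ℝ) (hF : F ∅ = 0) :
    ∑ p ∈ (labelPartition y₂).parts, F p = ∑ k, F (univ.filter fun x₂ => y₂ x₂ = k) := by
  have hparts : (labelPartition y₂).parts =
      (univ.image y₂).image fun k => univ.filter fun x₂ => y₂ x₂ = k := by
    simp only [image_image]
    show univ.image _ = _
    congr 1
    ext a : 1
    simp [Function.comp, eq_comm]
  have hinj : Set.InjOn (fun k => univ.filter fun x₂ => y₂ x₂ = k) (univ.image y₂) := by
    rintro _ hk k' - hkk'
    obtain ⟨a, -, rfl⟩ := mem_image.mp hk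
    simpa using (Finset.ext_iff.mp hkk' a).mp (by simp)
  rw [hparts, sum_image hinj]
  refine sum_subset (subset_univ _) fun k _ hk => ?_
  have hempty : univ.filter (fun x₂ => y₂ x₂ = k) = ∅ :=
    filter_false_of_mem fun x₂ _ hx₂ => hk (hx₂ ▸ mem_image_of_mem y₂ (mem_univ x₂))
  rw [hempty, hF]

def rowMass (M : X₁ → X₂ → ℝ) (x₁ : X₁) : ℝ := ∑ x₂, M x₁ x₂

theorem sum_fiber_eq_ite {M : X₁ → X₂ → ℝ} {y₁ : X₁ → Y} {y₂ : X₂ → Y}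
    (hsupp : ∀ x₁ x₂, M x₁ x₂ ≠ 0 → y₁ x₁ = y₂ x₂) (x₁ : X₁) (k : Y) :
    ∑ x₂ ∈ univ.filter (fun x₂ => y₂ x₂ = k), M x₁ x₂ = if y₁ x₁ = k then rowMass M x₁ else 0 := by
  split_ifs with h
  · refine sum_subset (subset_univ _) fun x₂ _ hx₂ => ?_
    by_contra hne
    exact hx₂ (by simp [← h, hsupp _ _ hne])
  · refine sum_eq_zero fun x₂ hx₂ => ?_
    by_contra hne
    exact h ((hsupp _ _ hne).trans (mem_filter.mp hx₂).2)

end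

section

variable {α Y : Type*} [Fintype α] [DecidableEq Y]

def classMass (y : α → Y) (g : α → ℝ) (k : Y) : ℝ := ∑ a ∈ univ.filter fun a => y a = k, g a

theorem sum_ite_mul_div_classMass_sq (y : α → Y) (g : α → ℝ) (a : α) :
    ∑ b, (if y a = y b then g a * g b / classMass y g (y a) ^ 2 else 0) =
      g a / classMass y g (y a) := by
  have hterm : ∀ b, (if y a = y b then g a * g b / classMass y g (y a) ^ 2 else 0) =
      if y b = y a then g a / classMass y g (y a) ^ 2 * g b else 0 := by
    intro b
    simp only [eq_comm (a := y a)]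
    split_ifs <;> ring
  rw [sum_congr rfl fun b _ => hterm b, ← sum_filter, ← mul_sum]
  change g a / classMass y g (y a) ^ 2 * classMass y g (y a) = _
  rcases eq_or_ne (classMass y g (y a)) 0 with h | h
  · simp [h]
  · field_simp

theorem sum_sum_ite_mul_div_classMass_sq [Fintype Y] (y : α → Y) (g : α → ℝ) :
    ∑ a, ∑ b, (if y a = y b then g a * g b / classMass y g (y a) ^ 2 else 0) =
      #(univ.filter fun k => classMass y g k ≠ 0) := by
  simp only [sum_ite_mul_div_classMass_sq]
  rw [← sum_fiberwise univ y, natCast_card_filter]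
  refine sum_congr rfl fun k _ => ?_
  rw [sum_congr rfl fun a ha => by rw [(mem_filter.mp ha).2], ← sum_div]
  split_ifs with h
  · exact div_self h
  · rw [not_not.mp h, div_zero]

end

section

variable {X₁ X₂ Y : Type*} [Fintype X₁] [Fintype X₂] [Fintype Y] [DecidableEq X₂] [DecidableEq Y]
  {M : X₁ → X₂ → ℝ} {y₁ : X₁ → Y} {y₂ : X₂ → Y}

theorem augWeight_labelPartition (hsupp : ∀ x₁ x₂, M x₁ x₂ ≠ 0 → y₁ x₁ = y₂ x₂) (x x' : X₁) :
    augWeight M (labelPartition y₂) x x' =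
      if y₁ x = y₁ x' then rowMass M x * rowMass M x' / classMass y₁ (rowMass M) (y₁ x)
      else 0 := by
  rw [augWeight, sum_parts_labelPartition y₂ _ (by simp)]
  simp only [sum_fiber_eq_ite hsupp, ← sum_filter]
  simp only [ite_mul, zero_mul, ite_div, zero_div, sum_ite_eq, mem_univ, if_true]
  simp only [mul_ite, mul_zero, ite_div, zero_div, eq_comm (a := y₁ x')]
  rfl

theorem normAdj_labelPartition_sq (hsupp : ∀ x₁ x₂, M x₁ x₂ ≠ 0 → y₁ x₁ = y₂ x₂)
    (hw : ∀ x₁, 0 ≤ rowMass M x₁) (x x' : X₁) :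
    normAdj M (labelPartition y₂) x x' ^ 2 =
      if y₁ x = y₁ x' then rowMass M x * rowMass M x' / classMass y₁ (rowMass M) (y₁ x) ^ 2
      else 0 := by
  change (augWeight M (labelPartition y₂) x x' / √(rowMass M x * rowMass M x')) ^ 2 = _
  rw [div_pow, Real.sq_sqrt (mul_nonneg (hw x) (hw x')), augWeight_labelPartition hsupp]
  split_ifs
  · rcases eq_or_ne (rowMass M x * rowMass M x') 0 with h | h
    · simp [h]
    · field_simp
  · simp

end

theorem frobSq_labelPartition_general {X₁ X₂ Y : Type*} [Fintype X₁] [Fintype X₂] [Fintype Y]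
    [DecidableEq X₂] [DecidableEq Y]
    (M : X₁ → X₂ → ℝ)
    (hM : ∀ x₁ x₂, 0 ≤ M x₁ x₂)
    (y₁ : X₁ → Y) (y₂ : X₂ → Y)
    (hcompat : ∀ x₁ x₂, 0 < M x₁ x₂ → y₁ x₁ = y₂ x₂) :
    ∑ x₁, ∑ x₁', (normAdj M (labelPartition y₂) x₁ x₁') ^ 2 =
      ((univ.filter fun k : Y =>
        0 < ∑ x₁ ∈ univ.filter fun x₁ => y₁ x₁ = k, ∑ x₂, M x₁ x₂).card : ℝ) := by
  have hsupp : ∀ x₁ x₂, M x₁ x₂ ≠ 0 → y₁ x₁ = y₂ x₂ :=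
    fun x₁ x₂ h => hcompat x₁ x₂ ((hM x₁ x₂).lt_of_ne' h)
  have hw : ∀ x₁, 0 ≤ rowMass M x₁ := fun x₁ => sum_nonneg fun x₂ _ => hM x₁ x₂
  simp only [normAdj_labelPartition_sq hsupp hw, sum_sum_ite_mul_div_classMass_sq]
  congr 3 with k
  exact (sum_nonneg fun x₁ _ => hw x₁).lt_iff_ne'.symm

/-- Suppose `M(x₁,x₂) > 0` implies `y₁(x₁) = y₂(x₂)`.  For the label partition `S^y`
(with all blocks of positive mass), the squared Frobenius norm of the normalized
adjacency matrix (= the sum of squared eigenvalues `Σᵢ λᵢ²`) equals the number of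
label classes of positive mass. -/
theorem frobSq_labelPartition {X₁ X₂ Y : Type*} [Fintype X₁] [Fintype X₂] [Fintype Y]
    [DecidableEq X₂] [DecidableEq Y]
    (M : X₁ → X₂ → ℝ)
    (hM : ∀ x₁ x₂, 0 ≤ M x₁ x₂)
    (hsum : ∑ x₁, ∑ x₂, M x₁ x₂ = 1)
    (hmarg : ∀ x₁, 0 < ∑ x₂, M x₁ x₂)
    (y₁ : X₁ → Y) (y₂ : X₂ → Y)
    (hcompat : ∀ x₁ x₂, 0 < M x₁ x₂ → y₁ x₁ = y₂ x₂)
    (hwy : ∀ p ∈ (labelPartition y₂).parts, 0 < ∑ x₁, ∑ x₂ ∈ p, M x₁ x₂) :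
    ∑ x₁, ∑ x₁', (normAdj M (labelPartition y₂) x₁ x₁') ^ 2 =
      ((univ.filter fun k : Y =>
        0 < ∑ x₁ ∈ univ.filter fun x₁ => y₁ x₁ = k, ∑ x₂, M x₁ x₂).card : ℝ) :=
  frobSq_labelPartition_general M hM y₁ y₂ hcompat
end

section
/- Let R̄ ∈ ℝ^{l₁×l₂} be row-stochastic and let C = R̄·R̄ᵀ. Then the Token-Class Alignment Similarity M(R̄) = (1/l₁)·Σ_{i=1}^{l₁}(1 − C_{ii})² + (1/l₁²)·Σ_{i≠i'} C_{ii'}² satisfies M(R̄) ≥ 0, and M(R̄) = 0 if and only if C equals the identity matrix I_{l₁×l₁}, which holds if and only if every row R̄(i) is a standard basis vector of ℝ^{l₂} and distinct rows are orthogonal (equivalently, distinct rows are distinct basis vectors). -/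
/-!
The diagonal entry `C i i = ∑ⱼ (R i j)²` of a row with nonnegative entries summing to `1` is at most
`∑ⱼ R i j = 1`, with equality exactly when every entry is `0` or `1`, that is, when the row is a
standard basis vector. TCAS is a positive combination of squares of the entries of `C - 1`, so it
vanishes exactly when `C = 1`; and two standard basis vectors are orthogonal exactly when they are
distinct.
-/

open Finset

/-- The Token-Class Alignment Similarity (TCAS) of a token-class co-occurrence
matrix `R̄ ∈ ℝ^{l₁ × l₂}` with `C = R̄·R̄ᵀ`:
`M(R̄) = (1/l₁)·Σᵢ (1 − Cᵢᵢ)² + (1/l₁²)·Σ_{i ≠ i'} C_{ii'}²`. -/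
noncomputable def TCAS {l₁ l₂ : ℕ} (R : Matrix (Fin l₁) (Fin l₂) ℝ) : ℝ :=
  (1 / (l₁ : ℝ)) * ∑ i, (1 - (R * R.transpose) i i) ^ 2 +
    (1 / (l₁ : ℝ) ^ 2) * ∑ i, ∑ i', if i ≠ i' then ((R * R.transpose) i i') ^ 2 else 0

open Matrix

section StochasticVector

variable {n α : Type*} [Fintype n] [DecidableEq n]
  [CommRing α] [LinearOrder α] [IsStrictOrderedRing α] {v : n → α}

theorem dotProduct_self_eq_one_iff_eq_single (hv : ∀ j, 0 ≤ v j) (hsum : ∑ j, v j = 1) :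
    v ⬝ᵥ v = 1 ↔ ∃ j, v = Pi.single j 1 := by
  refine ⟨fun h => ?_, by rintro ⟨j, rfl⟩; simp⟩
  have hle : ∀ j, v j ≤ 1 := fun j => hsum ▸ single_le_sum (fun k _ => hv k) (mem_univ j)
  have hsum_mul : ∑ j, v j * (1 - v j) = 0 := by
    simp only [mul_one_sub, sum_sub_distrib, hsum]
    exact sub_eq_zero.2 h.symm
  have h01 : ∀ j, v j * (1 - v j) = 0 := fun j =>
    (sum_eq_zero_iff_of_nonneg fun k _ => mul_nonneg (hv k) (sub_nonneg.2 (hle k))).1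
      hsum_mul j (mem_univ j)
  obtain ⟨j, -, hj⟩ := exists_ne_zero_of_sum_ne_zero (hsum ▸ one_ne_zero : ∑ j, v j ≠ 0)
  have hj1 : v j = 1 := by
    have := h01 j
    rw [mul_eq_zero, sub_eq_zero] at this
    exact this.resolve_left hj |>.symm
  refine ⟨j, funext fun j' => ?_⟩
  rcases eq_or_ne j' j with rfl | hne
  · simp [hj1]
  · have := add_le_sum (fun k _ => hv k) (mem_univ j) (mem_univ j') hne.symm
    rw [Pi.single_eq_of_ne hne]
    exact le_antisymm (by linarith) (hv j')

end StochasticVector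

section OrthonormalRows

variable {m n α : Type*} [Fintype n]

theorem single_one_dotProduct_single_one_eq_zero_iff [DecidableEq n] [NonAssocSemiring α]
    [Nontrivial α] {j j' : n} : (Pi.single j 1 : n → α) ⬝ᵥ Pi.single j' 1 = 0 ↔
      (Pi.single j 1 : n → α) ≠ Pi.single j' 1 := by
  rw [single_dotProduct, one_mul, Pi.single_apply]
  split_ifs with h
  · simp [h]
  · refine iff_of_true rfl fun heq => one_ne_zero (α := α) ?_
    simpa [Pi.single_apply, h] using congrFun heq j

theorem Matrix.eq_one_iff [DecidableEq m] [Zero α] [One α] {A : Matrix m m α} :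
    A = 1 ↔ (∀ i, A i i = 1) ∧ ∀ i i', i ≠ i' → A i i' = 0 := by
  rw [← Matrix.ext_iff]
  refine ⟨fun h => ⟨fun i => (h i i).trans (one_apply_eq i),
    fun i i' hne => (h i i').trans (one_apply_ne hne)⟩, ?_⟩
  rintro ⟨hdiag, hoff⟩ i i'
  rw [one_apply]
  split_ifs with h
  · exact h ▸ hdiag i
  · exact hoff i i' h

theorem Matrix.mul_transpose_self_eq_one_iff [DecidableEq m] [NonAssocSemiring α] {R : Matrix m n α} :
    R * Rᵀ = 1 ↔ (∀ i, R i ⬝ᵥ R i = 1) ∧ ∀ i i', i ≠ i' → R i ⬝ᵥ R i' = 0 :=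
  Matrix.eq_one_iff

theorem pairwise_dotProduct_eq_zero_iff_injective [DecidableEq n] [NonAssocSemiring α]
    [Nontrivial α] {v : m → n → α} (hv : ∀ i, ∃ j, v i = Pi.single j 1) :
    (∀ i i', i ≠ i' → v i ⬝ᵥ v i' = 0) ↔ Function.Injective v := by
  rw [Function.injective_iff_pairwise_ne]
  refine forall₂_congr fun i i' => imp_congr_right fun _ => ?_
  obtain ⟨j, hj⟩ := hv i
  obtain ⟨j', hj'⟩ := hv i'
  rw [Function.onFun, hj, hj']
  exact single_one_dotProduct_single_one_eq_zero_iff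

end OrthonormalRows

section TCAS

variable {l₁ l₂ : ℕ} (R : Matrix (Fin l₁) (Fin l₂) ℝ)

theorem TCAS_nonneg : 0 ≤ TCAS R := by
  unfold TCAS
  positivity

theorem TCAS_eq_zero_iff : TCAS R = 0 ↔ R * Rᵀ = 1 := by
  -- for `l₁ = 0` the weights `1 / l₁` are junk zeros, and both sides hold trivially
  rcases isEmpty_or_nonempty (Fin l₁) with _ | hne
  · simp [TCAS, Subsingleton.elim (R * Rᵀ) 1]
  have hl : (l₁ : ℝ) ≠ 0 := Nat.cast_ne_zero.2 (Fin.pos_iff_nonempty.2 hne).ne'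
  unfold TCAS
  rw [add_eq_zero_iff_of_nonneg (by positivity) (by positivity)]
  simp (disch := intros; positivity) only [mul_eq_zero, one_div, inv_eq_zero, pow_eq_zero_iff, hl,
    false_or, sum_eq_zero_iff_of_nonneg, mem_univ, forall_const, ite_eq_right_iff, sub_eq_zero,
    eq_comm (a := (1 : ℝ))]
  rw [Matrix.eq_one_iff]

end TCAS

/-- For a row-stochastic `R̄` with `C = R̄·R̄ᵀ`, the TCAS metric is nonnegative, and
it is zero iff `C = I`, which holds iff every row of `R̄` is a standard basis vector
and distinct rows are orthogonal (equivalently, distinct rows are distinct basis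
vectors). -/
theorem tcas_nonneg_and_eq_zero_iff {l₁ l₂ : ℕ} (R : Matrix (Fin l₁) (Fin l₂) ℝ)
    (hnn : ∀ i j, 0 ≤ R i j) (hrow : ∀ i, ∑ j, R i j = 1) :
    0 ≤ TCAS R ∧
    (TCAS R = 0 ↔ R * R.transpose = 1) ∧
    (R * R.transpose = 1 ↔
      ((∀ i, ∃ j, ∀ j', R i j' = if j' = j then 1 else 0) ∧
        ∀ i i', i ≠ i' → ∑ j, R i j * R i' j = 0)) ∧
    (R * R.transpose = 1 ↔
      ((∀ i, ∃ j, ∀ j', R i j' = if j' = j then 1 else 0) ∧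
        Function.Injective fun i => R i)) := by
  have hbasis : R * Rᵀ = 1 ↔
      (∀ i, ∃ j, R i = Pi.single j 1) ∧ ∀ i i', i ≠ i' → R i ⬝ᵥ R i' = 0 := by
    rw [mul_transpose_self_eq_one_iff,
      forall_congr' fun i => dotProduct_self_eq_one_iff_eq_single (hnn i) (hrow i)]
  have hinj : R * Rᵀ = 1 ↔ (∀ i, ∃ j, R i = Pi.single j 1) ∧ Function.Injective fun i => R i := by
    rw [hbasis]
    exact and_congr_right pairwise_dotProduct_eq_zero_iff_injective
  simp only [funext_iff, Pi.single_apply] at hbasis hinj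
  exact ⟨TCAS_nonneg R, TCAS_eq_zero_iff R, hbasis, hinj⟩
end

section
/- There exists ε > 0 such that for all t with 0 < t < ε, the class-wise bound is strictly smaller than the MAE-like bound: 2 − (9/2)t + (39/4)t² − (29/2)t³ + (53/4)t⁴ − (95/16)t⁵ + (15/16)t⁶ < 2 − (15/4)t + (9/2)t² − (11/4)t³ + t⁴. -/
/-!
Both bounds equal `2` at `t = 0`, while their slopes there are `-9/2` (class-wise) and `-15/4`
(MAE-like). A function with the same value and a strictly smaller right derivative at a point
stays strictly below on a right neighbourhood of it, since the slope of the difference is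
eventually positive.
-/

open Filter Topology Set Polynomial

theorem eventually_lt_of_hasDerivWithinAt_Ioi {f g : ℝ → ℝ} {f' g' x₀ : ℝ}
    (hf : HasDerivWithinAt f f' (Ioi x₀) x₀) (hg : HasDerivWithinAt g g' (Ioi x₀) x₀)
    (h₀ : f x₀ = g x₀) (hlt : f' < g') : ∀ᶠ x in 𝓝[>] x₀, f x < g x := by
  have hslope : Tendsto (slope (g - f) x₀) (𝓝[>] x₀) (𝓝 (g' - f')) :=
    (hasDerivWithinAt_iff_tendsto_slope' self_notMem_Ioi).mp (hg.sub hf)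
  filter_upwards [hslope.eventually (eventually_gt_nhds (sub_pos.mpr hlt)),
    self_mem_nhdsWithin] with x hpos (hx : x₀ < x)
  simpa [slope_pos_iff hx, h₀] using hpos

theorem Polynomial.eventually_eval_lt_of_eval_eq_of_derivative_lt {p q : ℝ[X]} {x₀ : ℝ}
    (h₀ : p.eval x₀ = q.eval x₀) (hlt : p.derivative.eval x₀ < q.derivative.eval x₀) :
    ∀ᶠ x in 𝓝[>] x₀, p.eval x < q.eval x :=
  eventually_lt_of_hasDerivWithinAt_Ioi (p.hasDerivAt x₀).hasDerivWithinAt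
    (q.hasDerivAt x₀).hasDerivWithinAt h₀ hlt

/-- `B^MAE / c` as a polynomial in the overlap ratio `t = m / n`. -/
noncomputable def maeBound : ℝ[X] :=
  2 - C (15 / 4) * X + C (9 / 2) * X ^ 2 - C (11 / 4) * X ^ 3 + X ^ 4

/-- `B^class / c` as a polynomial in the overlap ratio `t = m / n`. -/
noncomputable def classwiseBound : ℝ[X] :=
  2 - C (9 / 2) * X + C (39 / 4) * X ^ 2 - C (29 / 2) * X ^ 3 + C (53 / 4) * X ^ 4 -
    C (95 / 16) * X ^ 5 + C (15 / 16) * X ^ 6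

theorem eval_maeBound (t : ℝ) :
    maeBound.eval t = 2 - (15 / 4) * t + (9 / 2) * t ^ 2 - (11 / 4) * t ^ 3 + t ^ 4 := by
  simp [maeBound]

theorem eval_classwiseBound (t : ℝ) :
    classwiseBound.eval t = 2 - (9 / 2) * t + (39 / 4) * t ^ 2 - (29 / 2) * t ^ 3 +
      (53 / 4) * t ^ 4 - (95 / 16) * t ^ 5 + (15 / 16) * t ^ 6 := by
  simp [classwiseBound]

theorem classwiseBound_eval_zero_eq : classwiseBound.eval 0 = maeBound.eval 0 := by
  norm_num [eval_classwiseBound, eval_maeBound]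

theorem classwiseBound_derivative_eval_zero_lt :
    classwiseBound.derivative.eval 0 < maeBound.derivative.eval 0 := by
  norm_num [classwiseBound, maeBound]

/-- For sufficiently small overlap ratio `t > 0`, the downstream error bound of
class-wise tokenization is strictly smaller than that of MAE-like tokenization in
the two-class toy model. -/
theorem classwise_lt_mae_bound :
    ∃ ε > 0, ∀ t : ℝ, 0 < t → t < ε →
      2 - (9 / 2) * t + (39 / 4) * t ^ 2 - (29 / 2) * t ^ 3 + (53 / 4) * t ^ 4 -
          (95 / 16) * t ^ 5 + (15 / 16) * t ^ 6 <
        2 - (15 / 4) * t + (9 / 2) * t ^ 2 - (11 / 4) * t ^ 3 + t ^ 4 := by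
  have hnear : ∀ᶠ t in 𝓝[>] 0, classwiseBound.eval t < maeBound.eval t :=
    eventually_eval_lt_of_eval_eq_of_derivative_lt classwiseBound_eval_zero_eq
      classwiseBound_derivative_eval_zero_lt
  obtain ⟨ε, hε, hlt⟩ := (nhdsGT_basis (0 : ℝ)).eventually_iff.mp hnear
  refine ⟨ε, hε, fun t ht htε => ?_⟩
  simpa only [eval_classwiseBound, eval_maeBound] using hlt ⟨ht, htε⟩
end

section
/- For all real numbers n, m with 0 < m < n, the ratio of intra-class to inter-class edge weight is strictly larger under class-wise tokenization than under MAE-like tokenization: [((n − m/2)² + (m/2)²)/(2n⁴)] / [m(n − m/2)/(4n⁴)] > [(2n − m)/(4n³)] / [m/(4n³)]; equivalently, 2((n − m/2)² + (m/2)²)/(m(n − m/2)) > (2n − m)/m. -/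
/-!
With `a = n - m/2` and `b = m/2`, both positive, the powers of `n` cancel in both ratios: the
MAE-like ratio is `a / b` and the class-wise ratio is `(a² + b²) / (a b)`, which exceeds it by
`b / a > 0`.
-/

theorem div_lt_sq_add_sq_div_mul {K : Type*} [Field K] [LinearOrder K] [IsStrictOrderedRing K]
    {a b : K} (ha : 0 < a) (hb : 0 < b) : a / b < (a ^ 2 + b ^ 2) / (a * b) := by
  rw [div_lt_div_iff₀ hb (mul_pos ha hb)]
  nlinarith [pow_pos hb 3]

theorem div_two_mul_div_div_four_mul {K : Type*} [Field K] [NeZero (2 : K)] (x y : K) {c : K}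
    (hc : c ≠ 0) : x / (2 * c) / (y / (4 * c)) = 2 * x / y := by
  rw [div_div_eq_mul_div]
  congr 1
  field_simp
  ring

theorem mae_ratio_lt_classwise_ratio {n m : ℝ} (hm : 0 < m) (hmn : m < n) :
    (2 * n - m) / m < 2 * ((n - m / 2) ^ 2 + (m / 2) ^ 2) / (m * (n - m / 2)) := by
  have ha : 0 < n - m / 2 := by linarith
  calc (2 * n - m) / m = (n - m / 2) / (m / 2) := by field_simp
    _ < ((n - m / 2) ^ 2 + (m / 2) ^ 2) / ((n - m / 2) * (m / 2)) :=
      div_lt_sq_add_sq_div_mul ha (half_pos hm)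
    _ = 2 * ((n - m / 2) ^ 2 + (m / 2) ^ 2) / (m * (n - m / 2)) := by field_simp

/-- In the two-class toy model, the ratio of intra-class to inter-class edge weight
is strictly larger under class-wise tokenization than under MAE-like tokenization. -/
theorem classwise_ratio_gt_mae_ratio (n m : ℝ) (hm : 0 < m) (hmn : m < n) :
    (((n - m / 2) ^ 2 + (m / 2) ^ 2) / (2 * n ^ 4)) / (m * (n - m / 2) / (4 * n ^ 4)) >
      ((2 * n - m) / (4 * n ^ 3)) / (m / (4 * n ^ 3)) ∧
    2 * ((n - m / 2) ^ 2 + (m / 2) ^ 2) / (m * (n - m / 2)) > (2 * n - m) / m := by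
  have hn : n ≠ 0 := (hm.trans hmn).ne'
  have ratio_lt := mae_ratio_lt_classwise_ratio hm hmn
  refine ⟨?_, ratio_lt⟩
  rwa [div_div_div_cancel_right₀ (by positivity),
    div_two_mul_div_div_four_mul _ _ (pow_ne_zero 4 hn)]
end
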